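/- Let X be a finite subset of a metric space and Y an ε-net of X, and suppose X is ε-chain connected, meaning any two points of X are joined by a finite sequence of points of X with consecutive distances at most ε. Then any two vertices y₁, y₂ of the Ball Mapper graph on Y (edges between y₁, y₂ whenever some x ∈ X lies in both closed ε-balls) are connected by a path in the graph on Y obtained by putting edges between net points at distance at most 3ε. -/
import Mathlib


/-- If `X` is a finite ε-chain connected subset of a metric space and `Y ⊆ X`
is an ε-net, then any two points of `Y` are connected by a chain of net points
with consecutive distances at most `3ε` (edges of the auxiliary Ball Mapper
graph). -/
theorem ballMapper_connected {α : Type*} [MetricSpace α] (X Y : Set α)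
    (hX : X.Finite) (ε : ℝ) (hε : 0 < ε) (hYX : Y ⊆ X)
    (hnet : ∀ x ∈ X, ∃ y ∈ Y, dist x y ≤ ε)
    (hchain : ∀ x ∈ X, ∀ x' ∈ X,
      Relation.ReflTransGen (fun a b => a ∈ X ∧ b ∈ X ∧ dist a b ≤ ε) x x') :
    ∀ y₁ ∈ Y, ∀ y₂ ∈ Y,
      Relation.ReflTransGen (fun a b => a ∈ Y ∧ b ∈ Y ∧ dist a b ≤ 3 * ε) y₁ y₂ := by
  intro y₁ hy₁ y₂ hy₂
  have key : ∀ x', Relation.ReflTransGen (fun a b => a ∈ X ∧ b ∈ X ∧ dist a b ≤ ε) y₁ x' →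
      ∀ y ∈ Y, dist x' y ≤ ε →
        Relation.ReflTransGen (fun a b => a ∈ Y ∧ b ∈ Y ∧ dist a b ≤ 3 * ε) y₁ y := by
    intro x' h
    induction h with
    | refl =>
      intro y hy hd
      exact Relation.ReflTransGen.single ⟨hy₁, hy, by linarith⟩
    | tail hab hbc ih =>
      rename_i b c
      intro y hy hd
      obtain ⟨z, hz, hzd⟩ := hnet b hbc.1
      have hby : Relation.ReflTransGen (fun a b => a ∈ Y ∧ b ∈ Y ∧ dist a b ≤ 3 * ε) y₁ z :=
        ih z hz hzd
      refine hby.tail ⟨hz, hy, ?_⟩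
      calc dist z y ≤ dist z b + dist b y := dist_triangle _ _ _
        _ ≤ dist z b + (dist b c + dist c y) := by linarith [dist_triangle b c y]
        _ ≤ ε + (ε + ε) := by
            have := hbc.2.2
            rw [dist_comm] at hzd
            linarith
        _ = 3 * ε := by ring
  exact key y₂ (hchain y₁ (hYX hy₁) y₂ (hYX hy₂)) y₂ hy₂ (by simp [hε.le])
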